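/- arXiv:1308.0122 — 2 statements merged into one kernel-verified Lean document; each statement's English description precedes it below -/
import Mathlib

section
/- Let L < U be real numbers and define μ : ℝ → ℝ by μ(t) = 0 for t ≤ L, μ(t) = sin(((t − L)/(U − L))·(π/2)) for L ≤ t ≤ U, and μ(t) = 1 for t ≥ U. Then μ is concave on the half-line [L, ∞). -/
/-!
On `[L, ∞)` the membership function is `sin ∘ θ` with `θ t = min ((t - L) / (U - L) * (π / 2)) (π / 2)`.
The clamp `θ` is a minimum of an affine function and a constant, hence concave, and it takes values
in `[0, π / 2]`, where `sin` is concave and nondecreasing; such a composition is concave.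
-/

open Real Set

theorem ConcaveOn.comp_of_mapsTo {𝕜 E β γ : Type*} [Semiring 𝕜] [PartialOrder 𝕜]
    [AddCommMonoid E] [AddCommMonoid β] [PartialOrder β] [AddCommMonoid γ] [PartialOrder γ]
    [SMul 𝕜 E] [SMul 𝕜 β] [SMul 𝕜 γ] {s : Set E} {t : Set β} {f : E → β} {g : β → γ}
    (hg : ConcaveOn 𝕜 t g) (hf : ConcaveOn 𝕜 s f) (hst : MapsTo f s t) (hg' : MonotoneOn g t) :
    ConcaveOn 𝕜 s (g ∘ f) :=
  ⟨hf.1, fun _ hx _ hy _ _ ha hb hab =>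
    (hg.2 (hst hx) (hst hy) ha hb hab).trans <|
      hg' (hg.1 (hst hx) (hst hy) ha hb hab) (hst (hf.1 hx hy ha hb hab)) (hf.2 hx hy ha hb hab)⟩

theorem concaveOn_sin_Icc_zero_pi_div_two : ConcaveOn ℝ (Icc 0 (π / 2)) sin :=
  strictConcaveOn_sin_Icc.concaveOn.subset (Icc_subset_Icc_right (by linarith [pi_pos]))
    (convex_Icc _ _)

theorem monotoneOn_sin_Icc_zero_pi_div_two : MonotoneOn sin (Icc 0 (π / 2)) :=
  strictMonoOn_sin.monotoneOn.mono (Icc_subset_Icc_left (by linarith [pi_pos]))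

theorem concaveOn_sub_div_mul (a b c : ℝ) {s : Set ℝ} (hs : Convex ℝ s) :
    ConcaveOn ℝ s fun t => (t - a) / b * c := by
  refine ⟨hs, fun x _ y _ p q _ _ hpq => le_of_eq ?_⟩
  obtain rfl : q = 1 - p := eq_sub_of_add_eq' hpq
  simp only [smul_eq_mul]
  ring

theorem piecewise_trigonometric_membership_concaveOn_Ici_general
    (L U : ℝ) (hLU : L < U) (μ : ℝ → ℝ)
    (h2 : ∀ t, L ≤ t → t ≤ U → μ t = Real.sin (((t - L) / (U - L)) * (π / 2)))
    (h3 : ∀ t, U ≤ t → μ t = 1) :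
    ConcaveOn ℝ (Set.Ici L) μ := by
  have hUL : 0 < U - L := sub_pos.mpr hLU
  set θ : ℝ → ℝ := fun t => min ((t - L) / (U - L) * (π / 2)) (π / 2)
  have hθ : ConcaveOn ℝ (Ici L) θ :=
    (concaveOn_sub_div_mul L (U - L) (π / 2) (convex_Ici L)).inf
      (concaveOn_const _ (convex_Ici L))
  have hθ_mem : MapsTo θ (Ici L) (Icc 0 (π / 2)) := fun t ht =>
    ⟨le_min (mul_nonneg (div_nonneg (sub_nonneg.2 ht) hUL.le) pi_div_two_pos.le)
      pi_div_two_pos.le, min_le_right _ _⟩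
  refine (concaveOn_sin_Icc_zero_pi_div_two.comp_of_mapsTo hθ hθ_mem
    monotoneOn_sin_Icc_zero_pi_div_two).congr fun t (ht : L ≤ t) => ?_
  simp only [Function.comp_apply, θ]
  rcases le_total t U with htU | hUt
  · rw [h2 t ht htU, min_eq_left]
    exact mul_le_of_le_one_left pi_div_two_pos.le ((div_le_one hUL).2 (by linarith))
  · rw [h3 t hUt, min_eq_right, sin_pi_div_two]
    exact le_mul_of_one_le_left pi_div_two_pos.le ((one_le_div hUL).2 (by linarith))

theorem piecewise_trigonometric_membership_concaveOn_Ici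
    (L U : ℝ) (hLU : L < U) (μ : ℝ → ℝ)
    (h1 : ∀ t, t ≤ L → μ t = 0)
    (h2 : ∀ t, L ≤ t → t ≤ U → μ t = Real.sin (((t - L) / (U - L)) * (π / 2)))
    (h3 : ∀ t, U ≤ t → μ t = 1) :
    ConcaveOn ℝ (Set.Ici L) μ :=
  piecewise_trigonometric_membership_concaveOn_Ici_general L U hLU μ h2 h3
end

section
/- Let a, d ∈ ℝⁿ have nonnegative components, let b be a real number and p > 0. Suppose x, y ∈ ℝⁿ satisfy 0 ≤ x ≤ y componentwise, a·x ≤ b ≤ (a + d)·x + p, and a·y ≤ b ≤ (a + d)·y + p. Then sin(((b − a·y)/(d·y + p))·(π/2)) ≤ sin(((b − a·x)/(d·x + p))·(π/2)); in other words, the trigonometric constraint membership function is monotonically decreasing with respect to the componentwise order on its middle region. -/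
/-!
The membership value is `sin (r x · π/2)` with `r x = (b - a ⬝ᵥ x) / (d ⬝ᵥ x + p)`.
Moving from `x` to `y ≥ x` shrinks the nonnegative numerator (as `a ≥ 0`) and enlarges the positive
denominator (as `d ≥ 0`), so `r y ≤ r x`. Both ratios lie in `[0, 1]`, where `t ↦ sin (t · π/2)`
is monotone.
-/

open Real Matrix

lemma sin_mul_pi_div_two_le_sin_mul_pi_div_two {s t : ℝ} (hs : -1 ≤ s) (hst : s ≤ t)
    (ht : t ≤ 1) : sin (s * (π / 2)) ≤ sin (t * (π / 2)) := by
  have hpi : 0 < π / 2 := by positivity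
  apply sin_le_sin_of_le_of_le_pi_div_two
  · nlinarith
  · nlinarith
  · exact mul_le_mul_of_nonneg_right hst hpi.le

section MembershipRatio

variable {ι : Type*} [Fintype ι] (a d : ι → ℝ) (b p : ℝ)

noncomputable def membershipRatio (x : ι → ℝ) : ℝ := (b - a ⬝ᵥ x) / (d ⬝ᵥ x + p)

variable {a d b p}

lemma membershipRatio_nonneg {x : ι → ℝ} (hd : 0 ≤ d) (hp : 0 < p) (hx : 0 ≤ x)
    (h : a ⬝ᵥ x ≤ b) : 0 ≤ membershipRatio a d b p x :=
  div_nonneg (sub_nonneg.mpr h) (by linarith [dotProduct_nonneg_of_nonneg hd hx])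

lemma membershipRatio_le_one {x : ι → ℝ} (hD : 0 < d ⬝ᵥ x + p)
    (h : b ≤ (a + d) ⬝ᵥ x + p) : membershipRatio a d b p x ≤ 1 := by
  rw [membershipRatio, div_le_one hD]
  linarith [add_dotProduct a d x]

lemma membershipRatio_le_of_le {x y : ι → ℝ} (ha : 0 ≤ a) (hd : 0 ≤ d) (hp : 0 < p)
    (hx : 0 ≤ x) (hxy : x ≤ y) (hy : a ⬝ᵥ y ≤ b) :
    membershipRatio a d b p y ≤ membershipRatio a d b p x := by
  have hax : a ⬝ᵥ x ≤ a ⬝ᵥ y := dotProduct_le_dotProduct_of_nonneg_left hxy ha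
  have hdx : d ⬝ᵥ x ≤ d ⬝ᵥ y := dotProduct_le_dotProduct_of_nonneg_left hxy hd
  have hDx : 0 < d ⬝ᵥ x + p := by linarith [dotProduct_nonneg_of_nonneg hd hx]
  exact div_le_div₀ (by linarith) (by linarith) hDx (by linarith)

end MembershipRatio

theorem constraint_membership_antitone_general
    (n : ℕ) (a d : Fin n → ℝ) (ha : ∀ i, 0 ≤ a i) (hd : ∀ i, 0 ≤ d i)
    (b p : ℝ) (hp : 0 < p)
    (x y : Fin n → ℝ) (hx0 : ∀ i, 0 ≤ x i) (hxy : ∀ i, x i ≤ y i)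
    (hx2 : b ≤ ∑ i, (a i + d i) * x i + p)
    (hy1 : ∑ i, a i * y i ≤ b) :
    Real.sin (((b - ∑ i, a i * y i) / ((∑ i, d i * y i) + p)) * (π / 2)) ≤
      Real.sin (((b - ∑ i, a i * x i) / ((∑ i, d i * x i) + p)) * (π / 2)) := by
  change sin (membershipRatio a d b p y * (π / 2)) ≤ sin (membershipRatio a d b p x * (π / 2))
  have hy0 : 0 ≤ y := le_trans hx0 hxy
  have hDx : 0 < d ⬝ᵥ x + p := by linarith [dotProduct_nonneg_of_nonneg (v := d) hd hx0]
  refine sin_mul_pi_div_two_le_sin_mul_pi_div_two ?_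
    (membershipRatio_le_of_le ha hd hp hx0 hxy hy1) (membershipRatio_le_one hDx hx2)
  linarith [membershipRatio_nonneg hd hp hy0 hy1]

theorem constraint_membership_antitone
    (n : ℕ) (a d : Fin n → ℝ) (ha : ∀ i, 0 ≤ a i) (hd : ∀ i, 0 ≤ d i)
    (b p : ℝ) (hp : 0 < p)
    (x y : Fin n → ℝ) (hx0 : ∀ i, 0 ≤ x i) (hxy : ∀ i, x i ≤ y i)
    (hx1 : ∑ i, a i * x i ≤ b) (hx2 : b ≤ ∑ i, (a i + d i) * x i + p)
    (hy1 : ∑ i, a i * y i ≤ b) (hy2 : b ≤ ∑ i, (a i + d i) * y i + p) :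
    Real.sin (((b - ∑ i, a i * y i) / ((∑ i, d i * y i) + p)) * (π / 2)) ≤
      Real.sin (((b - ∑ i, a i * x i) / ((∑ i, d i * x i) + p)) * (π / 2)) :=
  constraint_membership_antitone_general n a d ha hd b p hp x y hx0 hxy hx2 hy1
end
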